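/- Let L(π) = ∑_{s∈S} (V^{π*}(s) - V^π(s)) where π* is an optimal policy of a finite discounted MDP. Then L(π) ≥ 0 for all policies π, L(π) = 0 if and only if π is optimal, and along any trajectory π_t of the differential inclusion dπ_t(s)/dt ∈ {ω(s)(RM(π_t(s), Q^{π_t}(s)) - π_t(s)) : ω(s) ∈ [η,1]}, the derivative satisfies dL(π_t)/dt ≤ 0. -/

import Mathlib

/-!
With `g(s) = ∑_a (π'(s,a) - π(s,a)) Q^π(s,a)`, the Bellman equations give the
performance-difference identity `V^{π'} - V^π = g + γ P_{π'} (V^{π'} - V^π)`, and the minimum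
principle for the stochastic matrix `P_{π'}` then yields a state `s₀` with
`|S| g(s₀) ≤ (1 - γ) (L(π) - L(π'))`. Along the trajectory, `g` taken between `π_t` and `π_u`
has derivative `ω(s) (⟨RM, Q⟩ - ⟨π_t, Q⟩) ≥ 0` at `u = t`, because regret matching never
lowers the expected action value. Comparing one-sided slopes at `t` gives `dL/dt ≤ 0`, without
having to differentiate `V^{π_u}` itself. Parts (1) and (2) are immediate from the optimality
of `π*`.
-/

open Finset Filter Topology

theorem exists_deriv_le_of_eventually_exists_le {ι : Type*} [Finite ι] {f : ℝ → ℝ}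
    {g : ι → ℝ → ℝ} {a t : ℝ} {b : ι → ℝ} (hf : HasDerivAt f a t)
    (hg : ∀ i, HasDerivAt (g i) (b i) t) (ht : ∀ i, g i t = f t)
    (hle : ∀ᶠ u in 𝓝[>] t, ∃ i, g i u ≤ f u) : ∃ i, b i ≤ a := by
  by_contra! h
  have hlt : ∀ i, ∀ᶠ u in 𝓝[>] t, f u < g i u := fun i => by
    have hslope := (hasDerivAt_iff_tendsto_slope.mp ((hg i).sub hf)).mono_left
      (nhdsGT_le_nhdsNE t)
    filter_upwards [hslope.eventually_const_lt (sub_pos.mpr (h i)), self_mem_nhdsWithin]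
      with u hu htu
    rw [slope_pos_iff_of_le (le_of_lt htu), Pi.sub_apply, Pi.sub_apply, ht i, sub_self,
      sub_pos] at hu
    exact hu
  obtain ⟨u, hu, i, hi⟩ := ((eventually_all.mpr hlt).and hle).exists
  exact (hu i).not_ge hi

theorem exists_le_one_sub_mul_of_eq_add {S : Type*} [Fintype S] [Nonempty S] {K : S → S → ℝ}
    (hK : ∀ s s', 0 ≤ K s s') (hKsum : ∀ s, ∑ s', K s s' = 1) {γ : ℝ} (hγ : 0 ≤ γ)
    {g v : S → ℝ} (hv : ∀ s, v s = g s + γ * ∑ s', K s s' * v s') :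
    ∃ s₀, g s₀ ≤ (1 - γ) * v s₀ ∧ ∀ s, v s₀ ≤ v s := by
  obtain ⟨s₀, hmin⟩ := Finite.exists_min v
  refine ⟨s₀, ?_, hmin⟩
  have hmean : v s₀ ≤ ∑ s', K s₀ s' * v s' := calc
    v s₀ = ∑ s', K s₀ s' * v s₀ := by rw [← sum_mul, hKsum, one_mul]
    _ ≤ ∑ s', K s₀ s' * v s' :=
      sum_le_sum fun s' _ => mul_le_mul_of_nonneg_left (hmin s') (hK _ _)
  nlinarith [hv s₀]

theorem hasDerivAt_sum_sub_mul {A : Type*} [Fintype A] {p : ℝ → A → ℝ} {p' q : A → ℝ} {t : ℝ}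
    (hp : ∀ a, HasDerivAt (fun u => p u a) (p' a) t) :
    HasDerivAt (fun u => ∑ a, (p u a - p t a) * q a) (∑ a, p' a * q a) t :=
  HasDerivAt.fun_sum fun a _ => ((hp a).sub_const (p t a)).mul_const (q a)

namespace MDP

variable {S A : Type*} [Fintype A]

def IsActionValue [Fintype S] (P : S → A → S → ℝ) (r : S → A → ℝ) (γ : ℝ) (π Q : S → A → ℝ) :
    Prop :=
  ∀ s a, Q s a = r s a + γ * ∑ s', P s a s' * ∑ a', π s' a' * Q s' a'

-- `V^π(s) = ⟨π(s), Q^π(s)⟩` once `IsActionValue P r γ π Q` holds.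
def stateValue (π Q : S → A → ℝ) (s : S) : ℝ := ∑ a, π s a * Q s a

def transition (P : S → A → S → ℝ) (π : S → A → ℝ) (s s' : S) : ℝ := ∑ a, π s a * P s a s'

variable {P : S → A → S → ℝ} {r : S → A → ℝ} {γ : ℝ} {π π' Q Q' : S → A → ℝ}

theorem transition_nonneg (hP : ∀ s a s', 0 ≤ P s a s') (hπ : ∀ s a, 0 ≤ π s a) (s s' : S) :
    0 ≤ transition P π s s' :=
  sum_nonneg fun a _ => mul_nonneg (hπ s a) (hP s a s')

theorem sum_transition [Fintype S] (hP : ∀ s a, ∑ s', P s a s' = 1) (hπ : ∀ s, ∑ a, π s a = 1)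
    (s : S) :
    ∑ s', transition P π s s' = 1 := by
  simp only [transition]
  rw [sum_comm]
  simp only [← mul_sum, hP, mul_one, hπ]

theorem stateValue_sub_stateValue [Fintype S] (hQ : IsActionValue P r γ π Q)
    (hQ' : IsActionValue P r γ π' Q') (s : S) :
    stateValue π' Q' s - stateValue π Q s = ∑ a, (π' s a - π s a) * Q s a +
      γ * ∑ s', transition P π' s s' * (stateValue π' Q' s' - stateValue π Q s') := by
  have hQsub : ∀ a, Q' s a - Q s a =
      γ * ∑ s', P s a s' * (stateValue π' Q' s' - stateValue π Q s') := fun a => by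
    simp only [hQ' s a, hQ s a, stateValue, mul_sub, sum_sub_distrib]
    ring
  calc stateValue π' Q' s - stateValue π Q s
      = ∑ a, (π' s a - π s a) * Q s a + ∑ a, π' s a * (Q' s a - Q s a) := by
        simp only [stateValue, ← sum_add_distrib, ← sum_sub_distrib]
        exact sum_congr rfl fun a _ => by ring
    _ = _ := by
        simp only [hQsub, transition, mul_sum, sum_mul]
        rw [sum_comm]
        congr 2 with s'; congr 1 with a; ring

theorem exists_card_mul_advantage_le [Fintype S] [Nonempty S] (hP : ∀ s a s', 0 ≤ P s a s')
    (hPsum : ∀ s a, ∑ s', P s a s' = 1) (hπ' : ∀ s a, 0 ≤ π' s a) (hπ'sum : ∀ s, ∑ a, π' s a = 1)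
    (hγ0 : 0 ≤ γ) (hγ1 : γ ≤ 1) (hQ : IsActionValue P r γ π Q)
    (hQ' : IsActionValue P r γ π' Q') :
    ∃ s₀, Fintype.card S * ∑ a, (π' s₀ a - π s₀ a) * Q s₀ a ≤
      (1 - γ) * ∑ s, (stateValue π' Q' s - stateValue π Q s) := by
  obtain ⟨s₀, hgap, hmin⟩ := exists_le_one_sub_mul_of_eq_add (transition_nonneg hP hπ')
    (sum_transition hPsum hπ'sum) hγ0 (stateValue_sub_stateValue hQ hQ')
  refine ⟨s₀, ?_⟩
  have hmean := card_nsmul_le_sum univ _ _ fun s _ => hmin s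
  rw [card_univ, nsmul_eq_mul] at hmean
  have hcard : (0 : ℝ) ≤ Fintype.card S := Nat.cast_nonneg _
  nlinarith [mul_le_mul_of_nonneg_left hgap hcard,
    mul_le_mul_of_nonneg_left hmean (sub_nonneg.2 hγ1)]

end MDP

def regret {A : Type*} [Fintype A] (π q : A → ℝ) (a : A) : ℝ := max (q a - ∑ b, π b * q b) 0

theorem sum_mul_le_sum_regretMatching {A : Type*} [Fintype A] {π ρ q : A → ℝ}
    (hpos : (∃ a, 0 < regret π q a) → ∀ a, ρ a = regret π q a / ∑ b, regret π q b)
    (hzero : ¬ (∃ a, 0 < regret π q a) → ∀ a, ρ a = π a) :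
    ∑ a, π a * q a ≤ ∑ a, ρ a * q a := by
  by_cases h : ∃ a, 0 < regret π q a
  · have hZ : 0 < ∑ b, regret π q b := h.elim fun a ha =>
      ha.trans_le (single_le_sum (f := regret π q) (fun b _ => le_max_right _ _) (mem_univ a))
    have hsum : ∑ a, ρ a = 1 := by simp only [hpos h, ← sum_div, div_self hZ.ne']
    have hcentre : ∑ a, ρ a * q a - ∑ b, π b * q b = ∑ a, ρ a * (q a - ∑ b, π b * q b) := by
      simp only [mul_sub, sum_sub_distrib, ← sum_mul, hsum, one_mul]
    rw [← sub_nonneg, hcentre]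
    -- On the support of `ρ` we have `q a ≥ ⟨π, q⟩`, so every term is nonnegative.
    refine sum_nonneg fun a _ => ?_
    rw [hpos h a, div_mul_eq_mul_div]
    refine div_nonneg ?_ hZ.le
    rcases le_total 0 (q a - ∑ b, π b * q b) with hx | hx
    · simp only [regret, max_eq_left hx, mul_self_nonneg]
    · simp only [regret, max_eq_right hx, zero_mul, le_refl]
  · simp only [hzero h, le_refl]

open MDP

theorem stmt_15_general {S A : Type*} [Fintype S] [Fintype A] [Nonempty S]
    (P : S → A → S → ℝ) (r : S → A → ℝ) (γ : ℝ)
    (hγ0 : 0 < γ) (hγ1 : γ < 1)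
    (hPnn : ∀ s a s', 0 ≤ P s a s') (hPsum : ∀ s a, ∑ s', P s a s' = 1)
    -- an optimal policy `π*` with action-value function `Q*`
    (πstar : S → A → ℝ)
    (hπstarnn : ∀ s a, 0 ≤ πstar s a) (hπstarsum : ∀ s, ∑ a, πstar s a = 1)
    (Qstar : S → A → ℝ)
    (hQstar : ∀ s a,
      Qstar s a = r s a + γ * ∑ s', P s a s' * ∑ a', πstar s' a' * Qstar s' a')
    (hopt : ∀ (π' Qπ' : S → A → ℝ),
      (∀ s a, 0 ≤ π' s a) → (∀ s, ∑ a, π' s a = 1) →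
      (∀ s a, Qπ' s a = r s a + γ * ∑ s', P s a s' * ∑ a', π' s' a' * Qπ' s' a') →
      ∀ s, ∑ a, π' s a * Qπ' s a ≤ ∑ a, πstar s a * Qstar s a)
    (η : ℝ) (hη0 : 0 < η)
    -- a trajectory `π_t` of policies together with its action-value functions `Q^{π_t}`
    (πt Qt : ℝ → S → A → ℝ)
    (hπtnn : ∀ t s a, 0 ≤ πt t s a) (hπtsum : ∀ t s, ∑ a, πt t s a = 1)
    (hQt : ∀ t s a,
      Qt t s a = r s a + γ * ∑ s', P s a s' * ∑ a', πt t s' a' * Qt t s' a')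
    -- the regret-matching map evaluated along the trajectory
    (πhat : ℝ → S → A → ℝ)
    (hπhat : ∀ t s, (∃ a, 0 < max (Qt t s a - ∑ b, πt t s b * Qt t s b) 0) →
      ∀ a, πhat t s a =
        max (Qt t s a - ∑ b, πt t s b * Qt t s b) 0 /
          ∑ b, max (Qt t s b - ∑ c, πt t s c * Qt t s c) 0)
    (hπhat0 : ∀ t s, ¬ (∃ a, 0 < max (Qt t s a - ∑ b, πt t s b * Qt t s b) 0) →
      ∀ a, πhat t s a = πt t s a)
    -- `π_t` solves the differential inclusion
    (hsol : ∀ t s, ∃ ω : ℝ, ω ∈ Set.Icc η 1 ∧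
      ∀ a, HasDerivAt (fun u => πt u s a) (ω * (πhat t s a - πt t s a)) t) :
    -- (1) `L(π) ≥ 0` for every policy `π`
    (∀ (π' Qπ' : S → A → ℝ),
      (∀ s a, 0 ≤ π' s a) → (∀ s, ∑ a, π' s a = 1) →
      (∀ s a, Qπ' s a = r s a + γ * ∑ s', P s a s' * ∑ a', π' s' a' * Qπ' s' a') →
      0 ≤ ∑ s, (∑ a, πstar s a * Qstar s a - ∑ a, π' s a * Qπ' s a)) ∧
    -- (2) `L(π) = 0` iff `π` is optimal
    (∀ (π' Qπ' : S → A → ℝ),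
      (∀ s a, 0 ≤ π' s a) → (∀ s, ∑ a, π' s a = 1) →
      (∀ s a, Qπ' s a = r s a + γ * ∑ s', P s a s' * ∑ a', π' s' a' * Qπ' s' a') →
      ((∑ s, (∑ a, πstar s a * Qstar s a - ∑ a, π' s a * Qπ' s a)) = 0 ↔
        ∀ (π'' Qπ'' : S → A → ℝ),
          (∀ s a, 0 ≤ π'' s a) → (∀ s, ∑ a, π'' s a = 1) →
          (∀ s a, Qπ'' s a = r s a + γ * ∑ s', P s a s' * ∑ a', π'' s' a' * Qπ'' s' a') →
          ∀ s, ∑ a, π'' s a * Qπ'' s a ≤ ∑ a, π' s a * Qπ' s a)) ∧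
    -- (3) `dL/dt ≤ 0` along the trajectory
    (∀ t d : ℝ,
      HasDerivAt (fun u => ∑ s, (∑ a, πstar s a * Qstar s a - ∑ a, πt u s a * Qt u s a)) d t →
      d ≤ 0) := by
  have hgap_nonneg : ∀ π' Qπ', (∀ s a, 0 ≤ π' s a) → (∀ s, ∑ a, π' s a = 1) →
      IsActionValue P r γ π' Qπ' → ∀ s, 0 ≤ ∑ a, πstar s a * Qstar s a - ∑ a, π' s a * Qπ' s a :=
    fun π' Qπ' h1 h2 h3 s => sub_nonneg.2 (hopt π' Qπ' h1 h2 h3 s)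
  refine ⟨fun π' Qπ' h1 h2 h3 => sum_nonneg fun s _ => hgap_nonneg π' Qπ' h1 h2 h3 s,
    fun π' Qπ' h1 h2 h3 => ?_, fun t d hd => ?_⟩
  · rw [sum_eq_zero_iff_of_nonneg fun s _ => hgap_nonneg π' Qπ' h1 h2 h3 s]
    refine ⟨fun h π'' Qπ'' g1 g2 g3 s => ?_, fun h s _ => ?_⟩
    · linarith [h s (mem_univ s), hopt π'' Qπ'' g1 g2 g3 s]
    · linarith [h πstar Qstar hπstarnn hπstarsum hQstar s, hopt π' Qπ' h1 h2 h3 s]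
  choose ω hω hπderiv using hsol t
  set L := fun u => ∑ s, (∑ a, πstar s a * Qstar s a - ∑ a, πt u s a * Qt u s a)
  have hL : HasDerivAt (fun u => (1 - γ) * (L t - L u)) ((1 - γ) * (0 - d)) t :=
    ((hasDerivAt_const t (L t)).sub hd).const_mul _
  have hadv : ∀ s, HasDerivAt (fun u => Fintype.card S * ∑ a, (πt u s a - πt t s a) * Qt t s a)
      (Fintype.card S * ∑ a, ω s * (πhat t s a - πt t s a) * Qt t s a) t :=
    fun s => (hasDerivAt_sum_sub_mul (hπderiv s)).const_mul _
  have hle : ∀ u, ∃ s, Fintype.card S * ∑ a, (πt u s a - πt t s a) * Qt t s a ≤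
      (1 - γ) * (L t - L u) := fun u => by
    obtain ⟨s₀, hs₀⟩ := exists_card_mul_advantage_le hPnn hPsum (hπtnn u) (hπtsum u) hγ0.le
      hγ1.le (hQt t) (hQt u)
    refine ⟨s₀, hs₀.trans_eq ?_⟩
    simp only [L, stateValue, ← sum_sub_distrib]
    exact congrArg _ (sum_congr rfl fun s _ => sum_congr rfl fun a _ => by ring)
  obtain ⟨s, hs⟩ := exists_deriv_le_of_eventually_exists_le hL hadv (fun s => by simp)
    (Eventually.of_forall hle)
  have hascent : 0 ≤ ∑ a, ω s * (πhat t s a - πt t s a) * Qt t s a := by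
    simp only [mul_assoc, ← mul_sum, sub_mul, sum_sub_distrib]
    exact mul_nonneg (hη0.le.trans (hω s).1)
      (sub_nonneg.2 (sum_mul_le_sum_regretMatching (hπhat t s) (hπhat0 t s)))
  have hcard : (0 : ℝ) < Fintype.card S := Nat.cast_pos.2 Fintype.card_pos
  nlinarith [mul_nonneg hcard.le hascent]

/-- The optimality gap `L(π) = ∑_s (V^{π*}(s) - V^π(s))` is a Lyapunov function for the
regret-matching differential inclusion: `L ≥ 0`, `L(π) = 0` iff `π` is optimal, and
`dL/dt ≤ 0` along trajectories of
`dπ_t(s)/dt ∈ {ω(s)(RM(π_t(s), Q^{π_t}(s)) - π_t(s)) : ω(s) ∈ [η,1]}`. -/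
theorem stmt_15 {S A : Type*} [Fintype S] [Fintype A] [Nonempty S] [Nonempty A]
    (P : S → A → S → ℝ) (r : S → A → ℝ) (γ : ℝ)
    (hγ0 : 0 < γ) (hγ1 : γ < 1)
    (hPnn : ∀ s a s', 0 ≤ P s a s') (hPsum : ∀ s a, ∑ s', P s a s' = 1)
    -- an optimal policy `π*` with action-value function `Q*`
    (πstar : S → A → ℝ)
    (hπstarnn : ∀ s a, 0 ≤ πstar s a) (hπstarsum : ∀ s, ∑ a, πstar s a = 1)
    (Qstar : S → A → ℝ)
    (hQstar : ∀ s a,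
      Qstar s a = r s a + γ * ∑ s', P s a s' * ∑ a', πstar s' a' * Qstar s' a')
    (hopt : ∀ (π' Qπ' : S → A → ℝ),
      (∀ s a, 0 ≤ π' s a) → (∀ s, ∑ a, π' s a = 1) →
      (∀ s a, Qπ' s a = r s a + γ * ∑ s', P s a s' * ∑ a', π' s' a' * Qπ' s' a') →
      ∀ s, ∑ a, π' s a * Qπ' s a ≤ ∑ a, πstar s a * Qstar s a)
    (η : ℝ) (hη0 : 0 < η) (hη1 : η < 1)
    -- a trajectory `π_t` of policies together with its action-value functions `Q^{π_t}`
    (πt Qt : ℝ → S → A → ℝ)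
    (hπtnn : ∀ t s a, 0 ≤ πt t s a) (hπtsum : ∀ t s, ∑ a, πt t s a = 1)
    (hQt : ∀ t s a,
      Qt t s a = r s a + γ * ∑ s', P s a s' * ∑ a', πt t s' a' * Qt t s' a')
    -- the regret-matching map evaluated along the trajectory
    (πhat : ℝ → S → A → ℝ)
    (hπhat : ∀ t s, (∃ a, 0 < max (Qt t s a - ∑ b, πt t s b * Qt t s b) 0) →
      ∀ a, πhat t s a =
        max (Qt t s a - ∑ b, πt t s b * Qt t s b) 0 /
          ∑ b, max (Qt t s b - ∑ c, πt t s c * Qt t s c) 0)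
    (hπhat0 : ∀ t s, ¬ (∃ a, 0 < max (Qt t s a - ∑ b, πt t s b * Qt t s b) 0) →
      ∀ a, πhat t s a = πt t s a)
    -- `π_t` solves the differential inclusion
    (hsol : ∀ t s, ∃ ω : ℝ, ω ∈ Set.Icc η 1 ∧
      ∀ a, HasDerivAt (fun u => πt u s a) (ω * (πhat t s a - πt t s a)) t) :
    -- (1) `L(π) ≥ 0` for every policy `π`
    (∀ (π' Qπ' : S → A → ℝ),
      (∀ s a, 0 ≤ π' s a) → (∀ s, ∑ a, π' s a = 1) →
      (∀ s a, Qπ' s a = r s a + γ * ∑ s', P s a s' * ∑ a', π' s' a' * Qπ' s' a') →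
      0 ≤ ∑ s, (∑ a, πstar s a * Qstar s a - ∑ a, π' s a * Qπ' s a)) ∧
    -- (2) `L(π) = 0` iff `π` is optimal
    (∀ (π' Qπ' : S → A → ℝ),
      (∀ s a, 0 ≤ π' s a) → (∀ s, ∑ a, π' s a = 1) →
      (∀ s a, Qπ' s a = r s a + γ * ∑ s', P s a s' * ∑ a', π' s' a' * Qπ' s' a') →
      ((∑ s, (∑ a, πstar s a * Qstar s a - ∑ a, π' s a * Qπ' s a)) = 0 ↔
        ∀ (π'' Qπ'' : S → A → ℝ),
          (∀ s a, 0 ≤ π'' s a) → (∀ s, ∑ a, π'' s a = 1) →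
          (∀ s a, Qπ'' s a = r s a + γ * ∑ s', P s a s' * ∑ a', π'' s' a' * Qπ'' s' a') →
          ∀ s, ∑ a, π'' s a * Qπ'' s a ≤ ∑ a, π' s a * Qπ' s a)) ∧
    -- (3) `dL/dt ≤ 0` along the trajectory
    (∀ t d : ℝ,
      HasDerivAt (fun u => ∑ s, (∑ a, πstar s a * Qstar s a - ∑ a, πt u s a * Qt u s a)) d t →
      d ≤ 0) :=
  stmt_15_general P r γ hγ0 hγ1 hPnn hPsum πstar hπstarnn hπstarsum Qstar hQstar hopt η hη0 πt Qt
    hπtnn hπtsum hQt πhat hπhat hπhat0 hsol
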